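/- arXiv:1412.0715 — 2 statements merged into one kernel-verified Lean document; each statement's English description precedes it below -/
import Mathlib

section
/- Let Z be a Blaschke sequence in 𝔻 whose Blaschke product B = B_Z is uniformly nonzero. Then there exists a finite constant N such that for every ζ ∈ 𝔻 the number of points of Z, counted with multiplicity, lying in the pseudohyperbolic disk D(ζ,1/2) is at most N. -/
open Complex MeasureTheory Metric Filter Set List

noncomputable section

/-- The Möbius involution `φ_a(z) = (a - z)/(1 - ā z)` of the unit disk interchanging `0` and `a`. -/
def mobius (a z : ℂ) : ℂ := (a - z) / (1 - (starRingEnd ℂ) a * z)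

/-- The pseudohyperbolic metric `ψ(z,w) = |z - w| / |1 - w̄ z|`. -/
def pseudoDist (z w : ℂ) : ℝ := ‖(z - w) / (1 - (starRingEnd ℂ) w * z)‖

/-- A single Blaschke factor with zero at `a` (equal to `z` when `a = 0`). -/
def blaschkeFactor (a z : ℂ) : ℂ :=
  if a = 0 then z
  else ((starRingEnd ℂ) a / (‖a‖ : ℂ)) * ((a - z) / (1 - (starRingEnd ℂ) a * z))

/-- The Blaschke product associated with the sequence `Z`. -/
def blaschkeProduct (Z : ℕ → ℂ) (z : ℂ) : ℂ := ∏' k, blaschkeFactor (Z k) z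

/-- `Z` is a Blaschke sequence in the unit disk: `Σ (1 - |z_k|²) < ∞`. -/
def IsBlaschkeSeq (Z : ℕ → ℂ) : Prop :=
  (∀ k, ‖Z k‖ < 1) ∧ Summable (fun k => 1 - ‖Z k‖ ^ 2)

/-- A sequence is uniformly separated if `inf_k ∏_{j ≠ k} ψ(z_j, z_k) > 0`. -/
def UniformlySeparated {ι : Type*} (Z : ι → ℂ) : Prop :=
  ∃ δ : ℝ, 0 < δ ∧ ∀ k : ι, δ ≤ ∏' j : {j : ι // j ≠ k}, pseudoDist (Z j.1) (Z k)

/-- `Z` is a finite union of uniformly separated sequences. -/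
def FiniteUnionUnifSep (Z : ℕ → ℂ) : Prop :=
  ∃ (n : ℕ) (c : ℕ → Fin n), ∀ i : Fin n,
    UniformlySeparated (fun k : {k : ℕ // c k = i} => Z k.1)

/-- `φ` is a conformal automorphism of the unit disk. -/
def IsDiskAut (φ : ℂ → ℂ) : Prop :=
  ∃ c a : ℂ, ‖c‖ = 1 ∧ ‖a‖ < 1 ∧ ∀ z, φ z = c * mobius a z

/-- The sequence of functions `F n` tends to `0` uniformly on compact subsets of the unit disk. -/
def TendstoZeroOnCompacts (F : ℕ → ℂ → ℂ) : Prop :=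
  ∀ K : Set ℂ, K ⊆ Metric.ball (0 : ℂ) 1 → IsCompact K →
    TendstoUniformlyOn F (fun _ => (0 : ℂ)) Filter.atTop K

/-- `B` is uniformly (bounded away from) nonzero: for no sequence of conformal automorphisms
`φ_n` of the disk do the compositions `B ∘ φ_n` tend to `0` uniformly on compacta. -/
def UniformlyNonzero (B : ℂ → ℂ) : Prop :=
  ∀ φ : ℕ → ℂ → ℂ, (∀ n, IsDiskAut (φ n)) →
    ¬ TendstoZeroOnCompacts (fun n z => B (φ n z))

/-- The Carleson square based on the arc `{e^{iθ} : θ₀ ≤ θ ≤ θ₀ + 2πℓ}` of normalized length `ℓ`. -/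
def carlesonBox (θ₀ ℓ : ℝ) : Set ℂ :=
  {z : ℂ | z ≠ 0 ∧ ‖z‖ < 1 ∧ 1 - ‖z‖ < ℓ ∧
    ∃ θ ∈ Set.Icc θ₀ (θ₀ + 2 * Real.pi * ℓ),
      (z / (‖z‖ : ℂ)) = Complex.exp (θ * Complex.I)}

/-- `μ` is a Carleson measure with constant `C`. -/
def CarlesonWith (μ : Measure ℂ) (C : ℝ) : Prop :=
  ∀ θ₀ ℓ : ℝ, 0 < ℓ → ℓ ≤ 1 → μ (carlesonBox θ₀ ℓ) ≤ ENNReal.ofReal (C * ℓ)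

/-- `μ` is a Carleson measure. -/
def IsCarlesonMeasure (μ : Measure ℂ) : Prop := ∃ C : ℝ, CarlesonWith μ C

/-- The measure `Σ_k (1 - |z_k|²) δ_{z_k}`. -/
def seqMeasure (Z : ℕ → ℂ) : Measure ℂ :=
  Measure.sum (fun k => ENNReal.ofReal (1 - ‖Z k‖ ^ 2) • Measure.dirac (Z k))

/-- The number of occurrences of `ζ` in the sequence `Z`. -/
def multIn (Z : ℕ → ℂ) (ζ : ℂ) : ℕ := Nat.card {k : ℕ // Z k = ζ}

/-- `f` vanishes at each point of `Z` to order at least its multiplicity in `Z`. -/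
def VanishesOn (f : ℂ → ℂ) (Z : ℕ → ℂ) : Prop :=
  ∀ ζ : ℂ, ∀ j : ℕ, j < multIn Z ζ → iteratedDeriv j f ζ = 0

/-- The Bergman space norm `‖f‖_{A^p} = (∫_𝔻 |f|^p dA)^{1/p}`. -/
def bergmanNorm (p : ℝ) (f : ℂ → ℂ) : ℝ :=
  (∫ z in Metric.ball (0 : ℂ) 1, ‖f z‖ ^ p) ^ (1 / p)

/-- Membership in the Bergman space `A^p`. -/
def MemBergman (p : ℝ) (f : ℂ → ℂ) : Prop :=
  AnalyticOnNhd ℂ f (Metric.ball 0 1) ∧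
    IntegrableOn (fun z => ‖f z‖ ^ p) (Metric.ball (0 : ℂ) 1)

/-- The weighted Bergman norm `‖f‖_{A^{p,α}} = (∫_𝔻 |f(z)|^p (1-|z|²)^α dA(z))^{1/p}`. -/
def bergmanNormW (p α : ℝ) (f : ℂ → ℂ) : ℝ :=
  (∫ z in Metric.ball (0 : ℂ) 1,
    ‖f z‖ ^ p * (1 - ‖z‖ ^ 2) ^ α) ^ (1 / p)

/-- Membership in the weighted Bergman space `A^{p,α}`. -/
def MemBergmanW (p α : ℝ) (f : ℂ → ℂ) : Prop :=
  AnalyticOnNhd ℂ f (Metric.ball 0 1) ∧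
    IntegrableOn (fun z => ‖f z‖ ^ p * (1 - ‖z‖ ^ 2) ^ α)
      (Metric.ball (0 : ℂ) 1)

/-- The Hardy space integral means `M_p(f,r)^p`. -/
def hardyMean (p : ℝ) (f : ℂ → ℂ) (r : ℝ) : ℝ :=
  (2 * Real.pi)⁻¹ *
    ∫ θ in (0 : ℝ)..(2 * Real.pi), ‖f (r * Complex.exp (θ * Complex.I))‖ ^ p

/-- Membership in the Hardy space `H^p`, `0 < p < ∞`. -/
def MemHardy (p : ℝ) (f : ℂ → ℂ) : Prop :=
  AnalyticOnNhd ℂ f (Metric.ball 0 1) ∧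
    ∃ M : ℝ, ∀ r : ℝ, 0 < r → r < 1 → hardyMean p f r ≤ M

/-- `‖f‖_{H^p}^p = sup_{0<r<1} M_p(f,r)^p`. -/
def hardyNormP (p : ℝ) (f : ℂ → ℂ) : ℝ :=
  sSup {x : ℝ | ∃ r : ℝ, 0 < r ∧ r < 1 ∧ x = hardyMean p f r}

/-- Membership in `H^∞`: bounded analytic functions on the disk. -/
def MemHardyInf (f : ℂ → ℂ) : Prop :=
  AnalyticOnNhd ℂ f (Metric.ball 0 1) ∧
    ∃ M : ℝ, ∀ z ∈ Metric.ball (0 : ℂ) 1, ‖f z‖ ≤ M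

/-! If the counts were unbounded, there would be centres `ζₙ` whose disks `D(ζₙ, 1/2)` contain
at least `n` points of `Z`. Möbius invariance of `ψ` moves these points into `D(0, 1/2)` for
`B ∘ φ_{ζₙ}`, and on `|w| ≤ r` each of the corresponding Blaschke factors has modulus at most
a constant `q(r) < 1`, while every factor has modulus at most `1`. Hence `|B ∘ φ_{ζₙ}| ≤ q(r)ⁿ`
on compacta, so `B ∘ φ_{ζₙ} → 0` locally uniformly, contradicting uniform nonzeroness. -/

open ComplexConjugate

lemma sq_norm_one_sub_conj_mul (a z : ℂ) :
    ‖1 - conj a * z‖ ^ 2 = ‖a - z‖ ^ 2 + (1 - ‖a‖ ^ 2) * (1 - ‖z‖ ^ 2) := by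
  simp only [Complex.sq_norm, Complex.normSq_apply, Complex.mul_re, Complex.mul_im,
    Complex.sub_re, Complex.sub_im, Complex.one_re, Complex.one_im, Complex.conj_re,
    Complex.conj_im]
  ring

lemma one_sub_conj_mul_ne_zero {a z : ℂ} (ha : ‖a‖ < 1) (hz : ‖z‖ < 1) :
    1 - conj a * z ≠ 0 := by
  intro h
  have := sq_norm_one_sub_conj_mul a z
  rw [h, norm_zero] at this
  nlinarith [sq_nonneg ‖a - z‖, mul_pos (by nlinarith [norm_nonneg a] : (0:ℝ) < 1 - ‖a‖ ^ 2)
      (by nlinarith [norm_nonneg z] : (0:ℝ) < 1 - ‖z‖ ^ 2)]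

-- `1 - |φₐ z|² = (1 - |a|²)(1 - |z|²) / |1 - ā z|²` with `|1 - ā z| ≤ 2`, then `√(1 - x) ≤ 1 - x/2`.
lemma norm_mobius_le {a z : ℂ} (ha : ‖a‖ < 1) (hz : ‖z‖ < 1) :
    ‖mobius a z‖ ≤ 1 - (1 - ‖a‖ ^ 2) * (1 - ‖z‖ ^ 2) / 8 := by
  set P := (1 - ‖a‖ ^ 2) * (1 - ‖z‖ ^ 2)
  have hP : 0 < P := mul_pos (by nlinarith [norm_nonneg a]) (by nlinarith [norm_nonneg z])
  have hP1 : P ≤ 1 := mul_le_one₀ (by nlinarith [norm_nonneg a]) (by nlinarith [norm_nonneg z])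
    (by nlinarith [norm_nonneg z])
  have hD : 0 < ‖1 - conj a * z‖ := norm_pos_iff.2 (one_sub_conj_mul_ne_zero ha hz)
  have hD2 : ‖1 - conj a * z‖ ^ 2 ≤ 4 := by
    have : ‖1 - conj a * z‖ ≤ 2 :=
      calc ‖1 - conj a * z‖ ≤ ‖(1 : ℂ)‖ + ‖conj a‖ * ‖z‖ :=
            (norm_sub_le _ _).trans_eq (by rw [norm_mul])
        _ ≤ 2 := by rw [norm_one, Complex.norm_conj]; nlinarith [norm_nonneg a, norm_nonneg z]
    nlinarith
  have hsq : ‖mobius a z‖ ^ 2 ≤ 1 - P / 4 := by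
    have hid := sq_norm_one_sub_conj_mul a z
    rw [mobius, norm_div, div_pow, div_le_iff₀ (by positivity)]
    nlinarith [mul_nonneg hP.le (sub_nonneg.2 hD2)]
  rw [← sq_le_sq₀ (norm_nonneg _) (by linarith)]
  nlinarith

lemma norm_mobius_lt_one {a z : ℂ} (ha : ‖a‖ < 1) (hz : ‖z‖ < 1) : ‖mobius a z‖ < 1 := by
  refine (norm_mobius_le ha hz).trans_lt (sub_lt_self _ (div_pos ?_ (by norm_num)))
  exact mul_pos (by nlinarith [norm_nonneg a]) (by nlinarith [norm_nonneg z])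

lemma mobius_mobius {ζ a w : ℂ} (hζw : 1 - conj ζ * w ≠ 0) (hζa : 1 - conj ζ * a ≠ 0)
    (hD : 1 - conj ζ * w - conj a * (ζ - w) ≠ 0) :
    mobius a (mobius ζ w) =
      -((1 - conj ζ * a) / (1 - ζ * conj a)) * mobius (mobius ζ a) w := by
  have hζa' : 1 - ζ * conj a ≠ 0 := by
    simpa [mul_comm] using (map_ne_zero (starRingEnd ℂ)).2 hζa
  have hD' : 1 - ζ * conj a - (conj ζ - conj a) * w ≠ 0 := by
    convert hD using 1; ring
  simp only [mobius, map_div₀, map_sub, map_mul, Complex.conj_conj, map_one]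
  rw [sub_div' hζw, mul_div_assoc', one_sub_div hζw, div_div_div_cancel_right₀ hζw,
    div_sub' hζa, div_mul_eq_mul_div, one_sub_div hζa', div_div_div_eq,
    ← neg_div, div_mul_div_comm, div_eq_div_iff hD (mul_ne_zero hζa' (mul_ne_zero hζa hD'))]
  ring

lemma norm_mobius_mobius {ζ a w : ℂ} (hζ : ‖ζ‖ < 1) (ha : ‖a‖ < 1) (hw : ‖w‖ < 1) :
    ‖mobius a (mobius ζ w)‖ = ‖mobius (mobius ζ a) w‖ := by
  have hζw := one_sub_conj_mul_ne_zero hζ hw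
  have hfactor : 1 - conj ζ * w - conj a * (ζ - w) =
      (1 - conj ζ * w) * (1 - conj a * mobius ζ w) := by
    rw [mobius]
    field_simp
  have hD : 1 - conj ζ * w - conj a * (ζ - w) ≠ 0 := by
    rw [hfactor]
    exact mul_ne_zero hζw (one_sub_conj_mul_ne_zero ha (norm_mobius_lt_one hζ hw))
  have hconj : ‖1 - conj ζ * a‖ = ‖1 - ζ * conj a‖ := by
    rw [← Complex.norm_conj]; simp [mul_comm]
  have hF := one_sub_conj_mul_ne_zero hζ ha
  rw [mobius_mobius hζw hF hD, norm_mul, norm_neg, norm_div, ← hconj,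
    div_self (norm_ne_zero_iff.2 hF), one_mul]

lemma norm_mobius_eq_pseudoDist (w z : ℂ) : ‖mobius w z‖ = pseudoDist z w := by
  rw [mobius, pseudoDist, norm_div, norm_div, norm_sub_rev z w]

lemma norm_blaschkeFactor (a z : ℂ) : ‖blaschkeFactor a z‖ = ‖mobius a z‖ := by
  rw [blaschkeFactor, mobius]
  split_ifs with h
  · simp [h]
  · rw [norm_mul, norm_div, Complex.norm_conj, Complex.norm_real, Real.norm_of_nonneg
      (norm_nonneg a), div_self (norm_ne_zero_iff.2 h), one_mul]

lemma norm_blaschkeFactor_sub_one_le {a z : ℂ} (ha : ‖a‖ ≤ 1) (hz : ‖z‖ < 1) :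
    ‖blaschkeFactor a z - 1‖ ≤ 2 * (1 - ‖a‖) / (1 - ‖z‖) := by
  have hz1 : 0 < 1 - ‖z‖ := by linarith
  rw [le_div_iff₀ hz1]
  by_cases h : a = 0
  · rw [blaschkeFactor, if_pos h, h, norm_zero]
    nlinarith [norm_sub_le z 1, norm_one (α := ℂ), norm_nonneg z, norm_nonneg (z - 1)]
  have hα : ‖(‖a‖ : ℂ)‖ = ‖a‖ := by simp
  have hα0 : (‖a‖ : ℂ) ≠ 0 := by simpa using h
  have hden : 1 - ‖z‖ ≤ ‖1 - conj a * z‖ := by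
    have := norm_sub_norm_le (1 : ℂ) (conj a * z)
    rw [norm_one, norm_mul, Complex.norm_conj] at this
    nlinarith [norm_nonneg z]
  have hne : 1 - conj a * z ≠ 0 := norm_pos_iff.1 (hz1.trans_le hden)
  have hfactor : blaschkeFactor a z - 1 =
      ((‖a‖ : ℂ) - 1) * ((‖a‖ : ℂ) + conj a * z) / ((‖a‖ : ℂ) * (1 - conj a * z)) := by
    have hac : conj a * a = (‖a‖ : ℂ) ^ 2 := by
      rw [mul_comm, Complex.mul_conj, Complex.normSq_eq_norm_sq]; push_cast; ring
    rw [blaschkeFactor, if_neg h]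
    field_simp
    linear_combination hac
  have hα1 : ‖(‖a‖ : ℂ) - 1‖ = 1 - ‖a‖ := by
    rw [show (‖a‖ : ℂ) - 1 = ((‖a‖ - 1 : ℝ) : ℂ) by push_cast; rfl, Complex.norm_real,
      Real.norm_of_nonpos (by linarith), neg_sub]
  have hnum : ‖(‖a‖ : ℂ) + conj a * z‖ ≤ 2 * ‖a‖ := by
    calc ‖(‖a‖ : ℂ) + conj a * z‖ ≤ ‖a‖ + ‖a‖ * ‖z‖ := by
          grw [norm_add_le, hα, norm_mul, Complex.norm_conj]
      _ ≤ 2 * ‖a‖ := by nlinarith [norm_nonneg a]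
  have ha0 : 0 < ‖a‖ := norm_pos_iff.2 h
  rw [hfactor, norm_div, norm_mul, norm_mul, hα, hα1, div_mul_eq_mul_div,
    div_le_iff₀ (mul_pos ha0 (hz1.trans_le hden))]
  calc (1 - ‖a‖) * ‖(‖a‖ : ℂ) + conj a * z‖ * (1 - ‖z‖)
      ≤ (1 - ‖a‖) * (2 * ‖a‖) * ‖1 - conj a * z‖ := by
        gcongr
    _ = 2 * (1 - ‖a‖) * (‖a‖ * ‖1 - conj a * z‖) := by ring

lemma multipliable_blaschkeFactor {Z : ℕ → ℂ} (hZ : IsBlaschkeSeq Z) {z : ℂ} (hz : ‖z‖ < 1) :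
    Multipliable fun k => blaschkeFactor (Z k) z := by
  have hsum : Summable fun k => ‖blaschkeFactor (Z k) z - 1‖ := by
    refine Summable.of_nonneg_of_le (fun k => norm_nonneg _)
      (fun k => (norm_blaschkeFactor_sub_one_le (hZ.1 k).le hz).trans ?_)
      ((hZ.2.mul_left 2).div_const (1 - ‖z‖))
    gcongr
    nlinarith [norm_nonneg (Z k), hZ.1 k]
  simpa using multipliable_one_add_of_summable hsum

lemma norm_blaschkeProduct_le_prod {Z : ℕ → ℂ} (hZ : IsBlaschkeSeq Z) {z : ℂ} (hz : ‖z‖ < 1)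
    (S : Finset ℕ) : ‖blaschkeProduct Z z‖ ≤ ∏ k ∈ S, ‖blaschkeFactor (Z k) z‖ := by
  have hle : ∀ k, ‖blaschkeFactor (Z k) z‖ ≤ 1 := fun k => by
    rw [norm_blaschkeFactor]; exact (norm_mobius_lt_one (hZ.1 k) hz).le
  exact Antitone.le_of_tendsto (Finset.prod_anti_set_of_le_one (fun _ => norm_nonneg _) hle)
    (multipliable_blaschkeFactor hZ hz).hasProd.norm S

lemma norm_blaschkeFactor_mobius_le {ζ a w : ℂ} {ρ r : ℝ} (hζ : ‖ζ‖ < 1) (ha : ‖a‖ < 1)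
    (haζ : pseudoDist a ζ ≤ ρ) (hwr : ‖w‖ ≤ r) (hr : r < 1) :
    ‖blaschkeFactor a (mobius ζ w)‖ ≤ 1 - (1 - ρ ^ 2) * (1 - r ^ 2) / 8 := by
  have hw : ‖w‖ < 1 := hwr.trans_lt hr
  have hζa : ‖mobius ζ a‖ ≤ ρ := (norm_mobius_eq_pseudoDist ζ a).trans_le haζ
  rw [norm_blaschkeFactor, norm_mobius_mobius hζ ha hw]
  refine (norm_mobius_le (norm_mobius_lt_one hζ ha) hw).trans ?_
  have h1 : 1 - ρ ^ 2 ≤ 1 - ‖mobius ζ a‖ ^ 2 := by nlinarith [norm_nonneg (mobius ζ a)]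
  have h2 : 1 - r ^ 2 ≤ 1 - ‖w‖ ^ 2 := by nlinarith [norm_nonneg w]
  have h3 : 0 ≤ 1 - r ^ 2 := by nlinarith [norm_nonneg w]
  have h4 : 0 ≤ 1 - ‖mobius ζ a‖ ^ 2 := by
    nlinarith [norm_mobius_lt_one hζ ha, norm_nonneg (mobius ζ a)]
  nlinarith [mul_le_mul h1 h2 h3 h4]

lemma norm_blaschkeProduct_mobius_le {Z : ℕ → ℂ} (hZ : IsBlaschkeSeq Z) {ζ w : ℂ} {ρ r : ℝ}
    (hζ : ‖ζ‖ < 1) (hwr : ‖w‖ ≤ r) (hr : r < 1) {S : Finset ℕ}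
    (hS : ∀ k ∈ S, pseudoDist (Z k) ζ ≤ ρ) :
    ‖blaschkeProduct Z (mobius ζ w)‖ ≤ (1 - (1 - ρ ^ 2) * (1 - r ^ 2) / 8) ^ S.card := by
  calc ‖blaschkeProduct Z (mobius ζ w)‖
      ≤ ∏ k ∈ S, ‖blaschkeFactor (Z k) (mobius ζ w)‖ :=
        norm_blaschkeProduct_le_prod hZ (norm_mobius_lt_one hζ (hwr.trans_lt hr)) S
    _ ≤ ∏ _k ∈ S, (1 - (1 - ρ ^ 2) * (1 - r ^ 2) / 8) :=
        Finset.prod_le_prod (fun _ _ => norm_nonneg _)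
          (fun k hk => norm_blaschkeFactor_mobius_le hζ (hZ.1 k) (hS k hk) hwr hr)
    _ = _ := Finset.prod_const _

lemma tendstoZeroOnCompacts_blaschkeProduct_comp_mobius {Z : ℕ → ℂ} (hZ : IsBlaschkeSeq Z)
    {ρ : ℝ} (hρ0 : 0 ≤ ρ) (hρ1 : ρ < 1) {ζ : ℕ → ℂ} (hζ : ∀ n, ‖ζ n‖ < 1) {S : ℕ → Finset ℕ}
    (hS : ∀ n, ∀ k ∈ S n, pseudoDist (Z k) (ζ n) ≤ ρ)
    (hcard : Tendsto (fun n => (S n).card) atTop atTop) :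
    TendstoZeroOnCompacts fun n w => blaschkeProduct Z (mobius (ζ n) w) := by
  intro K hK hKc
  obtain ⟨r, ⟨hr0, hr1⟩, hKr⟩ := exists_pos_lt_subset_ball one_pos hKc.isClosed hK
  have hρr : 0 < (1 - ρ ^ 2) * (1 - r ^ 2) := mul_pos (by nlinarith) (by nlinarith)
  have hq0 : 0 ≤ 1 - (1 - ρ ^ 2) * (1 - r ^ 2) / 8 := by
    nlinarith [mul_le_one₀ (by nlinarith : 1 - ρ ^ 2 ≤ 1) (by nlinarith : 0 ≤ 1 - r ^ 2)
      (by nlinarith : 1 - r ^ 2 ≤ 1)]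
  have hq1 : 1 - (1 - ρ ^ 2) * (1 - r ^ 2) / 8 < 1 := by linarith
  have hqpow := (tendsto_pow_atTop_nhds_zero_of_lt_one hq0 hq1).comp hcard
  rw [Metric.tendstoUniformlyOn_iff]
  intro ε hε
  filter_upwards [hqpow.eventually_lt_const hε] with n hn w hw
  have hwr : ‖w‖ ≤ r := (mem_ball_zero_iff.1 (hKr hw)).le
  rw [dist_zero_left]
  exact (norm_blaschkeProduct_mobius_le hZ (hζ n) hwr hr1 (hS n)).trans_lt hn

lemma isDiskAut_mobius {a : ℂ} (ha : ‖a‖ < 1) : IsDiskAut (mobius a) :=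
  ⟨1, a, norm_one, ha, fun _ => (one_mul _).symm⟩

lemma Set.exists_finset_subset_card_eq {α : Type*} {s : Set α} {n : ℕ} (h : (n : ℕ∞) ≤ s.encard) :
    ∃ t : Finset α, ↑t ⊆ s ∧ t.card = n := by
  obtain ⟨t, hts, htn⟩ := Set.exists_subset_encard_eq h
  have ht : t.Finite := Set.finite_of_encard_eq_coe htn
  refine ⟨ht.toFinset, by simpa using hts, ?_⟩
  exact_mod_cast ht.encard_eq_coe_toFinset_card.symm.trans htn

/-- If the Blaschke product of the Blaschke sequence `Z` is uniformly nonzero,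
then there is a uniform bound `N` on the number of points of `Z` (counted with multiplicity,
i.e. the number of indices) lying in any pseudohyperbolic disk `D(ζ, 1/2)`, `ζ ∈ 𝔻`. -/
theorem uniformlyNonzero_implies_bounded_count
    (Z : ℕ → ℂ) (hZ : IsBlaschkeSeq Z)
    (h : UniformlyNonzero (blaschkeProduct Z)) :
    ∃ N : ℕ, ∀ ζ : ℂ, ‖ζ‖ < 1 →
      {k : ℕ | pseudoDist (Z k) ζ < 1 / 2}.encard ≤ (N : ℕ∞) := by
  by_contra! hN
  choose ζ hζ hcount using hN
  choose S hSsub hScard using fun n => Set.exists_finset_subset_card_eq (hcount n).le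
  refine h (fun n => mobius (ζ n)) (fun n => isDiskAut_mobius (hζ n)) ?_
  refine tendstoZeroOnCompacts_blaschkeProduct_comp_mobius hZ (ρ := 1 / 2) (by norm_num)
    (by norm_num) hζ (fun n k hk => (hSsub n hk).le) ?_
  simp only [hScard]
  exact tendsto_id

end
end

section
/- Let Z be a sequence of distinct points in 𝔻 and N a positive integer such that every closed pseudohyperbolic disk of radius 1/2 contains at most N points of Z. Then Z can be partitioned into N subsequences Z_1, …, Z_N such that ψ(a,b) > 1/2 for every pair of distinct points a, b belonging to the same subsequence Z_j. -/
open Complex MeasureTheory Metric Filter Set List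

noncomputable section

/-!
Join two indices when their points lie within pseudohyperbolic distance `1/2`. The closed disk of
radius `1/2` about `z_k` contains `z_k` and at most `N - 1` further points, so every vertex of this
graph has fewer than `N` neighbours, and colouring `0, 1, 2, …` greedily with `N` colours never
gets stuck. The colour classes are the required subsequences.
-/

namespace SimpleGraph

theorem colorable_of_encard_neighborSet_inter_Iio_lt (G : SimpleGraph ℕ) (N : ℕ)
    (h : ∀ k, (G.neighborSet k ∩ Iio k).encard < N) : G.Colorable N := by
  have : NeZero N := NeZero.of_pos <| by simpa using h 0
  have free_color : ∀ (k : ℕ) (f : ℕ → Fin N), ∃ i, i ∉ f '' (G.neighborSet k ∩ Iio k) := by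
    intro k f
    refine (ne_univ_iff_exists_notMem _).1 fun huniv => ?_
    have hlt := (encard_image_le f _).trans_lt (h k)
    rw [huniv, encard_univ, ENat.card_eq_coe_fintype_card, Fintype.card_fin] at hlt
    exact lt_irrefl _ hlt
  choose pick hpick using free_color
  -- `hpick k f` only concerns `f` below `k`, so the filler `0` is never consulted.
  let c : ℕ → Fin N :=
    wellFounded_lt.fix fun k ih => pick k fun j => if hj : j < k then ih j hj else 0
  have hc : ∀ k, c k = pick k fun j => if j < k then c j else 0 :=
    fun k => wellFounded_lt.fix_eq _ k
  have lower_ne : ∀ j k, G.Adj j k → j < k → c j ≠ c k := by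
    intro j k hadj hjk hcol
    refine hpick k (fun j => if j < k then c j else 0) ⟨j, ⟨hadj.symm, hjk⟩, ?_⟩
    simp only [if_pos hjk, hcol, ← hc k]
  refine ⟨Coloring.mk c fun {j k} hadj => ?_⟩
  rcases lt_or_gt_of_ne hadj.ne with hjk | hkj
  · exact lower_ne j k hadj hjk
  · exact (lower_ne k j hadj.symm hkj).symm

end SimpleGraph

theorem pseudoDist_comm (z w : ℂ) : pseudoDist z w = pseudoDist w z := by
  unfold pseudoDist
  rw [norm_div, norm_div, ← neg_sub w z, norm_neg,
    ← Complex.norm_conj (1 - (starRingEnd ℂ) z * w)]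
  congr 2
  simp only [map_sub, map_one, map_mul, Complex.conj_conj]
  ring

theorem pseudoDist_self (z : ℂ) : pseudoDist z z = 0 := by
  simp [pseudoDist]

def pseudoNearGraph (Z : ℕ → ℂ) (r : ℝ) : SimpleGraph ℕ :=
  SimpleGraph.fromRel fun j k => pseudoDist (Z j) (Z k) ≤ r

theorem pseudoNearGraph_adj {Z : ℕ → ℂ} {r : ℝ} {j k : ℕ} :
    (pseudoNearGraph Z r).Adj j k ↔ j ≠ k ∧ pseudoDist (Z j) (Z k) ≤ r := by
  rw [pseudoNearGraph, SimpleGraph.fromRel_adj, pseudoDist_comm (Z k), or_self]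

theorem encard_neighborSet_pseudoNearGraph_lt {Z : ℕ → ℂ} {r : ℝ} (hr : 0 ≤ r) {N : ℕ} (k : ℕ)
    (hcount : {j : ℕ | pseudoDist (Z j) (Z k) ≤ r}.encard ≤ N) :
    ((pseudoNearGraph Z r).neighborSet k).encard < N := by
  have hsub : insert k ((pseudoNearGraph Z r).neighborSet k) ⊆
      {j : ℕ | pseudoDist (Z j) (Z k) ≤ r} := by
    rintro j (rfl | hj)
    · simpa only [mem_ofPred_eq, pseudoDist_self] using hr
    · exact (pseudoNearGraph_adj.1 ((pseudoNearGraph Z r).adj_symm hj)).2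
  have hle := (encard_mono hsub).trans hcount
  rw [encard_insert_of_notMem (SimpleGraph.notMem_neighborSet_self _)] at hle
  have hfin : ((pseudoNearGraph Z r).neighborSet k).encard ≠ ⊤ := by
    intro htop
    simp [htop] at hle
  exact ENat.lt_add_one_iff hfin |>.2 le_rfl |>.trans_le hle

theorem partition_into_separated_subsequences_general
    (Z : ℕ → ℂ) (hZ : ∀ k, ‖Z k‖ < 1)
    (N : ℕ)
    (hcount : ∀ ζ : ℂ, ‖ζ‖ < 1 →
      {k : ℕ | pseudoDist (Z k) ζ ≤ 1 / 2}.encard ≤ (N : ℕ∞)) :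
    ∃ c : ℕ → Fin N, ∀ j k : ℕ, j ≠ k → c j = c k → 1 / 2 < pseudoDist (Z j) (Z k) := by
  obtain ⟨C⟩ := (pseudoNearGraph Z (1 / 2)).colorable_of_encard_neighborSet_inter_Iio_lt N
    fun k => (encard_mono inter_subset_left).trans_lt
      (encard_neighborSet_pseudoNearGraph_lt (by norm_num) k (hcount (Z k) (hZ k)))
  refine ⟨C, fun j k hjk hcol => ?_⟩
  by_contra! hnear
  exact C.valid (pseudoNearGraph_adj.2 ⟨hjk, hnear⟩) hcol

/-- If every closed pseudohyperbolic disk of radius `1/2` centered in the unit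
disk contains at most `N` points of the sequence `Z` of distinct points, then `Z` can be
partitioned into `N` subsequences, each of which is `1/2`-separated in the pseudohyperbolic
metric. -/
theorem partition_into_separated_subsequences
    (Z : ℕ → ℂ) (hZ : ∀ k, ‖Z k‖ < 1) (hinj : Function.Injective Z)
    (N : ℕ) (hN : 0 < N)
    (hcount : ∀ ζ : ℂ, ‖ζ‖ < 1 →
      {k : ℕ | pseudoDist (Z k) ζ ≤ 1 / 2}.encard ≤ (N : ℕ∞)) :
    ∃ c : ℕ → Fin N, ∀ j k : ℕ, j ≠ k → c j = c k → 1 / 2 < pseudoDist (Z j) (Z k) :=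
  partition_into_separated_subsequences_general Z hZ N hcount

end
end
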